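/- arXiv:1406.7784 — 4 statements merged into one kernel-verified Lean document; each statement's English description precedes it below -/
import Mathlib

section
/- For n ≥ 1 and 1 ≤ k ≤ n, the number of rooted G-configurations of size n with exactly k tree vertices equals C(n,k) * k^{k-1} * (n-1)!/(k-1)!. -/
/-!
A configuration whose tree vertices form a `k`-set `V` is a rooted tree on `V` together with an
injection of the `n - k` vertices outside `V` into the `n - 1` vertices other than the root; there
are `(n - 1)! / (k - 1)!` such injections, and `k ^ (k - 1)` rooted trees on `V` by Cayley's
formula.

Rooted trees are handled as parent maps `f : α → Option α`. Cayley's formula follows Pitman's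
double count: deleting the arc out of a vertex of a rooted forest with `i + 1` arcs, and grafting a
root of a forest with `i` arcs onto a vertex outside its own tree, are mutually inverse. This gives
`k ^ i * (k - 1).choose i` forests with `i` arcs on `k` vertices, hence `k ^ (k - 1)` rooted trees.
A rooted tree is recovered from its underlying graph by sending each vertex to its neighbour nearer
to the root.
-/

/-- A rooted `G`-configuration of size `n`: a nonempty subset `V ⊆ [n]`, an undirected
tree on `V` with a designated root `r ∈ V` (represented as a graph on `Fin n` whose edges
lie inside `V`, acyclic and connected on `V`), and for each vertex outside `V` exactly one
arc to a vertex `≠ r`, no two arcs ending at the same vertex.  (The arc map is recorded as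
a total function that is the identity on `V`.) -/
structure GConfig (n : ℕ) where
  V : Finset (Fin n)
  root : Fin n
  hroot : root ∈ V
  tree : SimpleGraph (Fin n)
  hedge : ∀ v w, tree.Adj v w → v ∈ V ∧ w ∈ V
  hconn : ∀ v ∈ V, ∀ w ∈ V, tree.Reachable v w
  hacyc : tree.IsAcyclic
  arc : Fin n → Fin n
  harcV : ∀ v ∈ V, arc v = v
  harc : ∀ v, v ∉ V → arc v ≠ root
  hinj : ∀ v w, v ∉ V → w ∉ V → arc v = arc w → v = w

open Finset Function Relation
open scoped Classical

namespace ParentMap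

variable {α : Type*} {f g : α → Option α} {r v w : α}

/-- `f v = some u` records that `u` is the parent of `v`, and `f v = none` that `v` is a root;
such a map describes a rooted forest exactly when following parents always ends at a root. -/
def IsForest (f : α → Option α) : Prop := WellFounded fun u v => f v = some u

/-- `Reaches f w v`: the vertex `v` is an ancestor of `w` (or `w` itself). -/
abbrev Reaches (f : α → Option α) : α → α → Prop := ReflTransGen fun a b => f a = some b

theorem IsForest.not_reaches_of_eq_some (hf : IsForest f) (h : f v = some w) :
    ¬ Reaches f w v := fun hwv =>
  hf.transGen.irrefl.irrefl v (transGen_swap.mpr (TransGen.head' h hwv))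

theorem IsForest.existsUnique_root (hf : IsForest f) (w : α) :
    ∃! r, f r = none ∧ Reaches f w r := by
  refine (existsUnique_of_exists_of_unique ?_ ?_)
  · induction w using hf.induction with
    | _ w ih =>
      cases hw : f w with
      | none => exact ⟨w, hw, .refl⟩
      | some u =>
        obtain ⟨r, hr, hur⟩ := ih u hw
        exact ⟨r, hr, .head hw hur⟩
  · have root_reaches {r x : α} (hr : f r = none) (h : Reaches f r x) : x = r := by
      rcases ReflTransGen.cases_head h with rfl | ⟨c, hc, -⟩
      · rfl
      · simp [hr] at hc
    rintro r₁ r₂ ⟨hr₁, h₁⟩ ⟨hr₂, h₂⟩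
    have hunique : Relator.RightUnique fun a b => f a = some b := fun _ _ _ hb hc =>
      Option.some_injective _ (hb.symm.trans hc)
    rcases ReflTransGen.total_of_right_unique hunique h₁ h₂ with h | h
    · exact (root_reaches hr₁ h).symm
    · exact root_reaches hr₂ h

theorem IsForest.update_none (hf : IsForest f) (v : α) : IsForest (update f v none) :=
  Subrelation.wf (fun {a b} h => by
    by_cases hb : b = v
    · simp [hb] at h
    · rwa [update_of_ne hb] at h) hf

theorem IsForest.update_some (hf : IsForest f) (hv : f v = none) (hwv : ¬ Reaches f w v) :
    IsForest (update f v (some w)) := by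
  -- Vertices that do not reach `v` keep their ancestors, and `w` is one of them.
  have acc_of_not_reaches (u : α) (hu : ¬ Reaches f u v) :
      Acc (fun x y => update f v (some w) y = some x) u := by
    induction u using hf.induction with
    | _ u ih =>
      have huv : u ≠ v := fun h => hu (h ▸ .refl)
      refine ⟨_, fun y hy => ih y ?_ fun hyv => hu (.head ?_ hyv)⟩ <;>
        rwa [update_of_ne huv] at hy
  refine ⟨fun u => ?_⟩
  induction u using hf.induction with
  | _ u ih =>
    refine ⟨_, fun y hy => ?_⟩
    by_cases huv : u = v
    · subst huv
      obtain rfl : w = y := by simpa using hy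
      exact acc_of_not_reaches w hwv
    · exact ih y (by rwa [update_of_ne huv] at hy)

theorem IsForest.not_reaches_update_none (hf : IsForest f) (h : f v = some w) :
    ¬ Reaches (update f v none) w v := by
  refine fun hwv => hf.not_reaches_of_eq_some h (ReflTransGen.mono (fun a b hab => ?_) _ _ hwv)
  by_cases ha : a = v
  · simp [ha] at hab
  · rwa [update_of_ne ha] at hab

section Counting

variable [Fintype α]

noncomputable def roots (f : α → Option α) : Finset α := {v | f v = none}

noncomputable def arcs (f : α → Option α) : Finset (α × α) := {p | f p.1 = some p.2}

/-- The ways `(v, w)` to hang the tree of the root `v` below a vertex `w` outside that tree. -/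
noncomputable def graftings (f : α → Option α) : Finset (α × α) :=
  {p | f p.1 = none ∧ ¬ Reaches f p.2 p.1}

variable (α) in
noncomputable def forestsWithArcs (i : ℕ) : Finset (α → Option α) :=
  {f | IsForest f ∧ #(arcs f) = i}

@[simp] theorem mem_roots : v ∈ roots f ↔ f v = none := by simp [roots]

@[simp] theorem mem_arcs : (v, w) ∈ arcs f ↔ f v = some w := by simp [arcs]

@[simp] theorem mem_graftings : (v, w) ∈ graftings f ↔ f v = none ∧ ¬ Reaches f w v := by
  simp [graftings]

theorem card_arcs_add_card_roots (f : α → Option α) :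
    #(arcs f) + #(roots f) = Fintype.card α := by
  have : #(arcs f) = #({v | f v ≠ none} : Finset α) :=
    card_bij (fun p _ => p.1) (by simp_all [arcs]) (by aesop (add simp arcs))
      (by simp [arcs, Option.ne_none_iff_exists'])
  simpa [this, roots] using card_filter_add_card_filter_not (s := univ) (fun v => f v ≠ none)

theorem arcs_update_none (h : f v = some w) :
    arcs (update f v none) = (arcs f).erase (v, w) := by
  ext ⟨a, b⟩
  by_cases ha : a = v <;> simp_all [arcs, update_apply, eq_comm]

theorem arcs_update_some (h : f v = none) :
    arcs (update f v (some w)) = insert (v, w) (arcs f) := by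
  ext ⟨a, b⟩
  by_cases ha : a = v <;> simp_all [arcs, update_apply, eq_comm]

theorem IsForest.card_reaches_root (hf : IsForest f) :
    #({p | f p.1 = none ∧ Reaches f p.2 p.1} : Finset (α × α)) = Fintype.card α := by
  rw [card_eq_sum_card_fiberwise (f := Prod.snd) (t := univ) (by simp),
    Fintype.card_eq_sum_ones]
  refine sum_congr rfl fun w _ => card_eq_one.mpr ?_
  obtain ⟨r, hr, hunique⟩ := hf.existsUnique_root w
  refine ⟨(r, w), ?_⟩
  ext ⟨a, b⟩
  simp only [mem_filter, mem_univ, true_and, mem_singleton, Prod.mk.injEq]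
  exact ⟨fun ⟨h, hb⟩ => ⟨hunique a (hb ▸ h), hb⟩, fun ⟨ha, hb⟩ => ⟨ha ▸ hb ▸ hr, hb⟩⟩

theorem IsForest.card_graftings (hf : IsForest f) :
    #(graftings f) = #(roots f) * Fintype.card α - Fintype.card α := by
  have hsplit : #({p | f p.1 = none ∧ Reaches f p.2 p.1} : Finset (α × α)) + #(graftings f) =
      #(roots f) * Fintype.card α := by
    rw [← card_univ, ← card_product, ← card_filter_add_card_filter_not (s := roots f ×ˢ univ)
      fun p => Reaches f p.2 p.1]
    congr 2 <;> ext <;> simp [graftings]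
  rw [← hsplit, hf.card_reaches_root, Nat.add_sub_cancel_left]

theorem mem_forestsWithArcs {i : ℕ} :
    f ∈ forestsWithArcs α i ↔ IsForest f ∧ #(arcs f) = i := by
  simp [forestsWithArcs]

/-- Pitman's double count: deleting the arc out of `v` and hanging the root `v` below `w` are
inverse bijections between forests with `i + 1` arcs and a chosen arc `(v, w)` and forests with `i`
arcs and a chosen grafting `(v, w)`. -/
theorem card_sigma_arcs_eq_card_sigma_graftings (i : ℕ) :
    #((forestsWithArcs α (i + 1)).sigma arcs) = #((forestsWithArcs α i).sigma graftings) := by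
  refine card_nbij' (fun x => ⟨update x.1 x.2.1 none, x.2⟩)
    (fun x => ⟨update x.1 x.2.1 (some x.2.2), x.2⟩) ?_ ?_ ?_ ?_
  · rintro ⟨f, v, w⟩ hx
    simp only [coe_sigma, Set.mem_sigma_iff, mem_coe, mem_forestsWithArcs, mem_arcs,
      mem_graftings] at hx ⊢
    obtain ⟨⟨hf, hcard⟩, hvw⟩ := hx
    refine ⟨⟨hf.update_none v, ?_⟩, by simp, hf.not_reaches_update_none hvw⟩
    rw [arcs_update_none hvw, card_erase_of_mem (mem_arcs.mpr hvw), hcard, Nat.add_sub_cancel]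
  · rintro ⟨g, v, w⟩ hx
    simp only [coe_sigma, Set.mem_sigma_iff, mem_coe, mem_forestsWithArcs, mem_arcs,
      mem_graftings] at hx ⊢
    obtain ⟨⟨hg, hcard⟩, hv, hwv⟩ := hx
    refine ⟨⟨hg.update_some hv hwv, ?_⟩, by simp⟩
    rw [arcs_update_some hv, card_insert_of_notMem (by simp [hv]), hcard]
  · rintro ⟨f, v, w⟩ hx
    simp only [coe_sigma, Set.mem_sigma_iff, mem_coe, mem_arcs] at hx
    simp [← hx.2]
  · rintro ⟨g, v, w⟩ hx
    simp only [coe_sigma, Set.mem_sigma_iff, mem_coe, mem_graftings] at hx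
    simp [← hx.2.1]

theorem card_forestsWithArcs_succ_mul (i : ℕ) :
    #(forestsWithArcs α (i + 1)) * (i + 1) =
      #(forestsWithArcs α i) * (Fintype.card α * (Fintype.card α - 1 - i)) := by
  have hbij := card_sigma_arcs_eq_card_sigma_graftings (α := α) i
  rw [card_sigma, card_sigma, sum_const_nat fun f hf => (mem_forestsWithArcs.mp hf).2,
    sum_const_nat fun g hg => ?_] at hbij
  · exact hbij
  obtain ⟨hg, hcard⟩ := mem_forestsWithArcs.mp hg
  have hroots := card_arcs_add_card_roots g
  rw [hg.card_graftings, mul_comm, ← Nat.mul_sub_one]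
  congr 1
  omega

theorem forestsWithArcs_zero : forestsWithArcs α 0 = {fun _ => none} := by
  ext f
  simp only [mem_forestsWithArcs, card_eq_zero, mem_singleton]
  constructor
  · rintro ⟨-, harcs⟩
    funext v
    by_contra hv
    obtain ⟨w, hw⟩ := Option.ne_none_iff_exists'.mp hv
    simpa [harcs] using mem_arcs.mpr hw
  · rintro rfl
    exact ⟨⟨fun a => ⟨a, fun b h => by simp at h⟩⟩, by ext ⟨a, b⟩; simp⟩

theorem card_forestsWithArcs (i : ℕ) :
    #(forestsWithArcs α i) = Fintype.card α ^ i * (Fintype.card α - 1).choose i := by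
  induction i with
  | zero => simp [forestsWithArcs_zero]
  | succ i ih =>
    refine Nat.eq_of_mul_eq_mul_right i.succ_pos ?_
    rw [card_forestsWithArcs_succ_mul, ih, mul_assoc _ _ (i + 1), Nat.choose_succ_right_eq]
    ring

variable (α) in
def Rooted : Type _ :=
  {p : α × (α → Option α) // IsForest p.2 ∧ ∀ v, p.2 v = none ↔ v = p.1}

theorem roots_eq_singleton_iff : roots f = {r} ↔ ∀ v, f v = none ↔ v = r := by
  simp [Finset.ext_iff]

theorem card_rooted [Nonempty α] :
    Nat.card (Rooted α) = Fintype.card α ^ (Fintype.card α - 1) := by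
  have hk := Fintype.card_pos (α := α)
  have htrees := card_forestsWithArcs (α := α) (Fintype.card α - 1)
  rw [Nat.choose_self, mul_one] at htrees
  rw [Rooted, Nat.card_eq_fintype_card, Fintype.card_subtype, ← htrees]
  refine card_bij (fun p _ => p.2) ?_ ?_ ?_
  · rintro ⟨r, f⟩ hp
    simp only [mem_filter, mem_univ, true_and, ← roots_eq_singleton_iff] at hp
    have := card_arcs_add_card_roots f
    rw [hp.2, card_singleton] at this
    exact mem_forestsWithArcs.mpr ⟨hp.1, show #(arcs f) = _ by omega⟩
  · rintro ⟨r, f⟩ hp ⟨r', f'⟩ hp' (rfl : f = f')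
    simp only [mem_filter, mem_univ, true_and] at hp hp'
    simp [← (hp'.2 r).mp ((hp.2 r).mpr rfl)]
  · intro f hf
    obtain ⟨hf, hcard⟩ := mem_forestsWithArcs.mp hf
    have := card_arcs_add_card_roots f
    obtain ⟨r, hr⟩ := card_eq_one.mp (show #(roots f) = 1 by omega)
    exact ⟨(r, f), by simpa [← roots_eq_singleton_iff] using ⟨hf, hr⟩, rfl⟩

end Counting

section Graph

open SimpleGraph

def toGraph (f : α → Option α) : SimpleGraph α := fromRel fun a b => f a = some b

theorem IsForest.ne_of_eq_some (hf : IsForest f) (h : f v = some w) : v ≠ w := by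
  rintro rfl
  exact hf.not_reaches_of_eq_some h .refl

theorem IsForest.toGraph_adj (hf : IsForest f) :
    (toGraph f).Adj v w ↔ f v = some w ∨ f w = some v :=
  ⟨fun h => h.2, fun h => ⟨h.elim hf.ne_of_eq_some (fun h => (hf.ne_of_eq_some h).symm), h⟩⟩

theorem IsForest.reachable_of_reaches (hf : IsForest f) (h : Reaches f v w) :
    (toGraph f).Reachable v w :=
  (reachable_iff_reflTransGen _ _).mpr <|
    ReflTransGen.lift id (fun _ _ hab => hf.toGraph_adj.mpr (.inl hab)) _ _ h

theorem IsForest.ncard_edgeSet_toGraph [Fintype α] (hf : IsForest f) :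
    (toGraph f).edgeSet.ncard = #(arcs f) := by
  have hedges :
      (toGraph f).edgeSet = (fun p : α × α => s(p.1, p.2)) '' (arcs f : Set (α × α)) := by
    ext e
    induction e using Sym2.ind with
    | _ a b =>
      simp only [mem_edgeSet, hf.toGraph_adj, Set.mem_image, mem_coe, Prod.exists, mem_arcs,
        Sym2.eq_iff]
      aesop
  rw [hedges, Set.InjOn.ncard_image, Set.ncard_coe_finset]
  rintro ⟨a, b⟩ hab ⟨c, d⟩ hcd hsym
  simp only [mem_coe, mem_arcs, Sym2.eq_iff] at hab hcd hsym
  rcases hsym with ⟨rfl, rfl⟩ | ⟨rfl, rfl⟩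
  · rfl
  · exact absurd (.single hcd) (hf.not_reaches_of_eq_some hab)

theorem IsForest.isTree_toGraph [Fintype α] (hf : IsForest f) (hr : ∀ v, f v = none ↔ v = r) :
    (toGraph f).IsTree := by
  have hconn : (toGraph f).Connected := by
    refine (connected_iff_exists_forall_reachable _).mpr ⟨r, fun x => ?_⟩
    obtain ⟨r', ⟨hr', hxr'⟩, -⟩ := hf.existsUnique_root x
    exact ((hr r').mp hr' ▸ hf.reachable_of_reaches hxr').symm
  refine isTree_iff_connected_and_card.mpr ⟨hconn, ?_⟩
  have hcount := card_arcs_add_card_roots f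
  rw [roots_eq_singleton_iff.mpr hr, card_singleton] at hcount
  rw [Nat.card_coe_set_eq, hf.ncard_edgeSet_toGraph, hcount, Nat.card_eq_fintype_card]

theorem IsForest.eq_of_toGraph_eq (hf : IsForest f) (hroots : ∀ v, f v = none ↔ g v = none)
    (h : toGraph f = toGraph g) : f = g := by
  funext v
  induction v using hf.induction with
  | _ v ih =>
    cases hv : f v with
    | none => exact ((hroots v).mp hv).symm
    | some u =>
      have hadj : (toGraph g).Adj v u := h ▸ hf.toGraph_adj.mpr (.inl hv)
      rcases hadj.2 with hg | hg
      · exact hg.symm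
      · rw [← ih u hv] at hg
        exact absurd (.single hg) (hf.not_reaches_of_eq_some hv)

end Graph

end ParentMap

namespace SimpleGraph

open ParentMap

variable {α : Type*} {G H : SimpleGraph α} {V : Set α} {r u v w : α}

theorem IsTree.eq_of_le (hH : H.IsTree) (hG : G.IsAcyclic) (h : H ≤ G) :
    H = G :=
  (isTree_iff_maximal_isAcyclic.mp hH).2.eq_of_le hG h

theorem Connected.exists_adj_dist_add_one (hG : G.Connected) (hv : v ≠ r) :
    ∃ u, G.Adj v u ∧ G.dist u r + 1 = G.dist v r := by
  obtain ⟨p, hp⟩ := hG.exists_walk_length_eq_dist v r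
  have hnil : ¬ p.Nil := Walk.not_nil_of_ne hv
  have hadj := Walk.adj_snd hnil
  refine ⟨p.snd, hadj, le_antisymm ?_ ?_⟩
  · have := dist_le p.tail
    have := Walk.length_tail_add_one hnil
    omega
  · obtain ⟨q, hq⟩ := hG.exists_walk_length_eq_dist p.snd r
    simpa [hq] using dist_le (Walk.cons hadj q)

/-- No neighbour of `r` is nearer to `r`, so `r` is the root of `treeParent G r`. -/
noncomputable def treeParent (G : SimpleGraph α) (r v : α) : Option α :=
  if h : ∃ u, G.Adj v u ∧ G.dist u r + 1 = G.dist v r then some h.choose else none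

theorem treeParent_spec {u : α} (h : treeParent G r v = some u) :
    G.Adj v u ∧ G.dist u r + 1 = G.dist v r := by
  unfold treeParent at h
  split_ifs at h with hex
  exact Option.some_injective _ h ▸ hex.choose_spec

theorem Connected.treeParent_eq_none_iff (hG : G.Connected) :
    treeParent G r v = none ↔ v = r := by
  unfold treeParent
  by_cases hv : v = r
  · simp [hv]
  · simp [hv, hG.exists_adj_dist_add_one hv]

theorem isForest_treeParent : IsForest (treeParent G r) :=
  Subrelation.wf (fun h => by have := (treeParent_spec h).2; simp only [onFun]; omega)
    (wellFounded_lt.onFun (f := fun v => G.dist v r))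

theorem IsTree.toGraph_treeParent [Fintype α] (hG : G.IsTree) :
    toGraph (treeParent G r) = G :=
  (isForest_treeParent.isTree_toGraph fun _ => hG.connected.treeParent_eq_none_iff).eq_of_le
    hG.isAcyclic fun _ _ h => (isForest_treeParent.toGraph_adj.mp h).elim
      (fun h => (treeParent_spec h).1) (fun h => (treeParent_spec h).1.symm)

theorem Walk.support_subset_of_adj_mem
    (hE : ∀ v w, G.Adj v w → v ∈ V ∧ w ∈ V) (p : G.Walk u w) (hu : u ∈ V) :
    ∀ x ∈ p.support, x ∈ V := by
  induction p with
  | nil => simpa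
  | cons h p ih =>
    intro x hx
    rw [Walk.support_cons, List.mem_cons] at hx
    exact hx.elim (· ▸ hu) (ih (hE _ _ h).2 x)

theorem isAcyclic_of_isAcyclic_induce
    (hE : ∀ v w, G.Adj v w → v ∈ V ∧ w ∈ V) (h : (G.induce V).IsAcyclic) : G.IsAcyclic := by
  intro u c hc
  have hsupp := c.support_subset_of_adj_mem hE (hE _ _ (Walk.adj_snd hc.not_nil)).1
  have hinj : Injective (Embedding.induce (G := G) V).toHom :=
    (Embedding.induce (G := G) V).injective
  refine h (c.induce V hsupp) ((Walk.isCycle_map_iff_of_injective hinj).mp ?_)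
  rwa [Walk.map_induce]

theorem map_induce_of_adj_mem (hE : ∀ v w, G.Adj v w → v ∈ V ∧ w ∈ V) :
    (G.induce V).map (Function.Embedding.subtype _) = G := by
  ext a b
  simp only [map_adj, comap_adj, Function.Embedding.subtype_apply, Subtype.exists]
  constructor
  · rintro ⟨a, -, b, -, h, rfl, rfl⟩
    exact h
  · intro h
    exact ⟨a, (hE _ _ h).1, b, (hE _ _ h).2, h, rfl, rfl⟩

end SimpleGraph

open ParentMap SimpleGraph

variable {α : Type*}

variable (α) in
def TreeWithRoot : Type _ := {p : α × SimpleGraph α // p.2.IsTree}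

noncomputable def ParentMap.rootedEquivTreeWithRoot [Fintype α] : Rooted α ≃ TreeWithRoot α where
  toFun p := ⟨(p.1.1, toGraph p.1.2), p.2.1.isTree_toGraph p.2.2⟩
  invFun t := ⟨(t.1.1, treeParent t.1.2 t.1.1), isForest_treeParent,
    fun _ => t.2.connected.treeParent_eq_none_iff⟩
  left_inv p := by
    obtain ⟨⟨r, f⟩, hf, hr⟩ := p
    have htree := hf.isTree_toGraph hr
    refine Subtype.ext (Prod.ext rfl (isForest_treeParent.eq_of_toGraph_eq (fun v => ?_)
      htree.toGraph_treeParent))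
    rw [htree.connected.treeParent_eq_none_iff, hr]
  right_inv t := Subtype.ext (Prod.ext rfl t.2.toGraph_treeParent)

section Transport

variable {V : Set α}

def TreeOn (V : Set α) : Type _ :=
  {p : α × SimpleGraph α // p.1 ∈ V ∧ (∀ v w, p.2.Adj v w → v ∈ V ∧ w ∈ V) ∧
    (∀ v ∈ V, ∀ w ∈ V, p.2.Reachable v w) ∧ p.2.IsAcyclic}

noncomputable def treeOnEquiv : TreeOn V ≃ TreeWithRoot V where
  toFun t := ⟨(⟨t.1.1, t.2.1⟩, t.1.2.induce V),
    (connected_iff_exists_forall_reachable _).mpr ⟨⟨t.1.1, t.2.1⟩, fun w =>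
      have ⟨p⟩ := t.2.2.2.1 _ t.2.1 _ w.2
      ⟨p.induce V (p.support_subset_of_adj_mem t.2.2.1 t.2.1)⟩⟩,
    t.2.2.2.2.induce V⟩
  invFun t := ⟨(t.1.1, t.1.2.map (Function.Embedding.subtype _)), t.1.1.2,
    fun v w h => by
      obtain ⟨a, b, -, rfl, rfl⟩ := (map_adj _ _ _ _).mp h
      exact ⟨a.2, b.2⟩,
    fun v hv w hw => (t.2.connected ⟨v, hv⟩ ⟨w, hw⟩).map (Embedding.map _ _).toHom,
    isAcyclic_of_isAcyclic_induce
      (fun v w h => by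
        obtain ⟨a, b, -, rfl, rfl⟩ := (map_adj _ _ _ _).mp h
        exact ⟨a.2, b.2⟩)
      (by rw [induce, comap_map_eq]; exact t.2.isAcyclic)⟩
  left_inv t := Subtype.ext (Prod.ext rfl (map_induce_of_adj_mem t.2.2.1))
  right_inv t := Subtype.ext (Prod.ext rfl (comap_map_eq _ _))

instance [Finite α] : Finite (TreeOn V) := by unfold TreeOn; infer_instance

theorem card_treeOn [Fintype α] {V : Finset α} (hV : V.Nonempty) :
    Nat.card (TreeOn (V : Set α)) = #V ^ (#V - 1) := by
  have : Nonempty (V : Set α) := hV.to_subtype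
  rw [Nat.card_congr (treeOnEquiv.trans rootedEquivTreeWithRoot.symm), card_rooted]
  simp

end Transport

section Arcs

variable {V : Set α} {r : α}

def ArcMap (V : Set α) (r : α) : Type _ :=
  {a : α → α // (∀ v ∈ V, a v = v) ∧ (∀ v, v ∉ V → a v ≠ r) ∧
    ∀ v w, v ∉ V → w ∉ V → a v = a w → v = w}

instance [Finite α] : Finite (ArcMap V r) := by unfold ArcMap; infer_instance

noncomputable def arcMapEquiv : ArcMap V r ≃ ({x // x ∉ V} ↪ {x // x ≠ r}) where
  toFun a := ⟨fun x => ⟨a.1 x, a.2.2.1 x x.2⟩,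
    fun x y h => Subtype.ext (a.2.2.2 x y x.2 y.2 (congrArg Subtype.val h))⟩
  invFun e := ⟨fun x => if hx : x ∈ V then x else e ⟨x, hx⟩,
    fun v hv => dif_pos hv,
    fun v hv => by simpa [hv] using (e ⟨v, hv⟩).2,
    fun v w hv hw h => by
      simpa [hv, hw] using
        congrArg Subtype.val (e.injective (Subtype.ext (by simpa [hv, hw] using h)))⟩
  left_inv a := by
    refine Subtype.ext (funext fun v => ?_)
    by_cases hv : v ∈ V
    · simp [hv, a.2.1 v hv]
    · exact dif_neg hv
  right_inv e := by
    ext x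
    simp [x.2]

theorem card_arcMap [Fintype α] (V : Finset α) (r : α) :
    Nat.card (ArcMap (V : Set α) r) =
      (Fintype.card α - 1).descFactorial (Fintype.card α - #V) := by
  rw [Nat.card_congr arcMapEquiv, Nat.card_eq_fintype_card, Fintype.card_embedding_eq]
  simp

end Arcs

theorem Nat.card_sigma_of_card_eq {ι : Type*} [Finite ι] {β : ι → Type*} [∀ i, Finite (β i)]
    {c : ℕ} (h : ∀ i, Nat.card (β i) = c) : Nat.card (Σ i, β i) = Nat.card ι * c := by
  have := Fintype.ofFinite ι
  rw [Nat.card_sigma, Finset.sum_congr rfl fun i _ => h i, Finset.sum_const, Finset.card_univ,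
    Nat.card_eq_fintype_card, smul_eq_mul]

noncomputable def GConfig.equivSigma (n k : ℕ) : {c : GConfig n // c.V.card = k} ≃
    Σ V : {S : Finset (Fin n) // S.card = k},
      Σ t : TreeOn (V : Set (Fin n)), ArcMap (V : Set (Fin n)) t.1.1 where
  toFun c := ⟨⟨c.1.V, c.2⟩, ⟨(c.1.root, c.1.tree), c.1.hroot, c.1.hedge, c.1.hconn, c.1.hacyc⟩,
    ⟨c.1.arc, c.1.harcV, c.1.harc, c.1.hinj⟩⟩
  invFun
    | ⟨⟨V, hV⟩, ⟨(r, T), hr, hedge, hconn, hacyc⟩, ⟨a, harcV, harc, hinj⟩⟩ =>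
      ⟨⟨V, r, hr, T, hedge, hconn, hacyc, a, harcV, harc, hinj⟩, hV⟩
  left_inv _ := rfl
  right_inv | ⟨⟨_, _⟩, ⟨(_, _), _, _, _, _⟩, ⟨_, _, _, _⟩⟩ => rfl

theorem stmt4_general (n k : ℕ) (hk : 1 ≤ k) (hkn : k ≤ n) :
    Nat.card {c : GConfig n // c.V.card = k} =
      n.choose k * k ^ (k - 1) * ((n - 1).factorial / (k - 1).factorial) := by
  have hdesc : (n - 1).descFactorial (n - k) = (n - 1).factorial / (k - 1).factorial := by
    rw [Nat.descFactorial_eq_div (by omega), show n - 1 - (n - k) = k - 1 by omega]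
  have hfiber (V : {S : Finset (Fin n) // S.card = k}) :
      Nat.card (Σ t : TreeOn (V : Set (Fin n)), ArcMap (V : Set (Fin n)) t.1.1) =
        k ^ (k - 1) * (n - 1).descFactorial (n - k) := by
    have hV : (V : Finset (Fin n)).Nonempty := card_pos.mp (by rw [V.2]; omega)
    rw [Nat.card_sigma_of_card_eq fun t => card_arcMap _ _, card_treeOn hV, V.2,
      Fintype.card_fin]
  rw [Nat.card_congr (GConfig.equivSigma n k), Nat.card_sigma_of_card_eq hfiber,
    Nat.card_eq_fintype_card, Fintype.card_finset_len, Fintype.card_fin, hdesc, mul_assoc]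

/-- For `1 ≤ k ≤ n`, the number of rooted `G`-configurations of size `n` with exactly `k`
tree vertices equals `C(n,k) · k^{k-1} · (n-1)!/(k-1)!`. -/
theorem stmt4 (n k : ℕ) (hn : 1 ≤ n) (hk : 1 ≤ k) (hkn : k ≤ n) :
    Nat.card {c : GConfig n // c.V.card = k} =
      n.choose k * k ^ (k - 1) * ((n - 1).factorial / (k - 1).factorial) :=
  stmt4_general n k hk hkn
end

section
/- For all n ≥ 1, \sum_{k=1}^{n} (-1)^{n-k} * C(n,k) * ((n-1)!/(k-1)!) * k^{k-1} is divisible by n. -/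
/-! Every summand is already divisible by `n`: from `k * C(n,k) = n * C(n-1,k-1)` and `k ∣ k^(k-1)`
for `k ≥ 2`, while for `k = 1` the binomial coefficient is `n` itself. -/

theorem Nat.dvd_choose_mul_self : ∀ n k : ℕ, n ∣ n.choose k * k
  | 0, 0 => dvd_refl 0
  | 0, _ + 1 => by rw [Nat.choose_zero_succ, zero_mul]
  | _ + 1, 0 => by rw [mul_zero]; exact dvd_zero _
  | n + 1, k + 1 => Dvd.intro _ (Nat.add_one_mul_choose_eq n k)

theorem Nat.dvd_choose_mul_pow_pred (n : ℕ) {k : ℕ} (hk : 0 < k) :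
    n ∣ n.choose k * k ^ (k - 1) := by
  obtain rfl | hk2 := Nat.eq_or_lt_of_le hk
  · simp
  · exact (Nat.dvd_choose_mul_self n k).trans (mul_dvd_mul_left _ (dvd_pow_self k (by omega)))

theorem stmt7_general (n : ℕ) :
    (n : ℤ) ∣ ∑ k ∈ Finset.Icc 1 n, (-1 : ℤ) ^ (n - k) * (n.choose k) *
      (((n - 1).factorial / (k - 1).factorial : ℕ) : ℤ) * (k : ℤ) ^ (k - 1) := by
  refine Finset.dvd_sum fun k hk => ?_
  have hdvd :=
    Int.natCast_dvd_natCast.mpr (Nat.dvd_choose_mul_pow_pred n (Finset.mem_Icc.mp hk).1)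
  push_cast at hdvd
  exact hdvd.trans ⟨(-1) ^ (n - k) * (((n - 1).factorial / (k - 1).factorial : ℕ) : ℤ), by ring⟩

/-- For all `n ≥ 1`, `n` divides `∑_{k=1}^n (-1)^{n-k} C(n,k) ((n-1)!/(k-1)!) k^{k-1}`. -/
theorem stmt7 (n : ℕ) (hn : 1 ≤ n) :
    (n : ℤ) ∣ ∑ k ∈ Finset.Icc 1 n, (-1 : ℤ) ^ (n - k) * (n.choose k) *
      (((n - 1).factorial / (k - 1).factorial : ℕ) : ℤ) * (k : ℤ) ^ (k - 1) :=
  stmt7_general n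
end

section
/- For every n ≥ 1, \sum_{k=1}^{n} (-1)^{n-k} * C(n,k) * ((n-1)!/(k-1)!) * k^{k-1} ≥ 0. -/
/-!
Call `x` a lonely point of `h : α → β` if `x` is alone in its fibre. Inclusion–exclusion over
the sets of lonely points counts the maps `[n] → [n]` without lonely points: after reflecting
`k ↦ n - k`, this count is `(-1)^n n! + n S`, where `S` is the sum in question (the term `k = 0`
gives `(-1)^n n!`). So `n S ≥ 0` is the inequality `(-1)^n n! ≤ #{maps without lonely points}`,
trivial for odd `n`. For `n = 2m`, a pair `(g, τ)` of an embedding `g : [m] ↪ [2m]` and a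
permutation `τ` of `[m]` gives the map that is `g` on one half of `[2m]` and `g ∘ τ` on the other;
these maps have no lonely point, are pairwise distinct, and there are `(2m)!` of them.
-/

open Finset Nat

section LonelyPoints

variable {α β : Type*}

def IsLonelyPoint (h : α → β) (x : α) : Prop := ∀ y, h y = h x → y = x

instance [Fintype α] [DecidableEq α] [DecidableEq β] (h : α → β) :
    DecidablePred (IsLonelyPoint h) :=
  fun _ => Fintype.decidableForallFintype

theorem forall_isLonelyPoint_iff (p : α → Prop) (h : α → β) :
    (∀ x, p x → IsLonelyPoint h x) ↔
      Function.Injective (fun x : {x // p x} => h x) ∧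
        ∀ (y : {y // ¬ p y}) (x : {x // p x}), h y ≠ h x := by
  constructor
  · intro hp
    exact ⟨fun a b hab => Subtype.ext (hp b b.2 a hab),
      fun y x hyx => y.2 (hp x x.2 y hyx ▸ x.2)⟩
  · rintro ⟨hinj, hne⟩ x hx y hyx
    by_cases hy : p y
    · exact congrArg Subtype.val (@hinj ⟨y, hy⟩ ⟨x, hx⟩ hyx)
    · exact absurd hyx (hne ⟨y, hy⟩ ⟨x, hx⟩)

theorem card_filter_forall_notMem (ι : Type*) [Fintype ι] [DecidableEq ι] [Fintype β]
    [DecidableEq β] (S : Finset β) :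
    #{g : ι → β | ∀ i, g i ∉ S} = (Fintype.card β - #S) ^ Fintype.card ι := by
  have : ({g : ι → β | ∀ i, g i ∉ S} : Finset _) = Fintype.piFinset fun _ => Sᶜ := by
    ext g
    simp
  rw [this, Fintype.card_piFinset, prod_const, card_compl, Finset.card_univ]

variable [Fintype α] [DecidableEq α] [Fintype β] [DecidableEq β]

theorem card_filter_forall_mem_isLonelyPoint (A : Finset α) :
    #{h : α → β | ∀ x ∈ A, IsLonelyPoint h x} =
      (Fintype.card β).descFactorial #A * (Fintype.card β - #A) ^ (Fintype.card α - #A) := by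
  rw [← Fintype.card_subtype, Fintype.card_congr
    ((Equiv.piEquivPiSubtypeProd (· ∈ A) fun _ => β).subtypeEquiv
      (q := fun e => Function.Injective e.1 ∧ ∀ y x, e.2 y ≠ e.1 x)
      fun h => forall_isLonelyPoint_iff (· ∈ A) h),
    Fintype.card_subtype, card_filter, Fintype.sum_prod_type]
  have hfiber (e : A → β) : ∑ g : {y // y ∉ A} → β,
      (if Function.Injective e ∧ ∀ y x, g y ≠ e x then 1 else 0) =
        if Function.Injective e then (Fintype.card β - #A) ^ (Fintype.card α - #A) else 0 := by
    split_ifs with he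
    · have h := card_filter_forall_notMem {y // y ∉ A} (univ.image e)
      rw [card_image_of_injective _ he, Finset.card_univ, Fintype.card_coe, Fintype.card_subtype_compl,
        Fintype.card_coe] at h
      simpa [he, ← card_filter, eq_comm] using h
    · simp [he]
  simp only [hfiber, sum_ite, sum_const_zero, add_zero, sum_const, smul_eq_mul]
  rw [← Fintype.card_subtype, Fintype.card_congr (Equiv.subtypeInjectiveEquivEmbedding _ _),
    Fintype.card_embedding_eq, Fintype.card_coe]

theorem card_filter_forall_not_isLonelyPoint :
    (#{h : α → β | ∀ x, ¬ IsLonelyPoint h x} : ℤ) =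
      ∑ a ∈ range (Fintype.card α + 1), (-1 : ℤ) ^ a * (Fintype.card α).choose a *
        ((Fintype.card β).descFactorial a * (Fintype.card β - a) ^ (Fintype.card α - a) : ℕ) := by
  have hinf (t : Finset α) : t.inf (fun x => ({h : α → β | IsLonelyPoint h x} : Finset _)) =
      ({h | ∀ x ∈ t, IsLonelyPoint h x} : Finset _) := by
    ext h
    simp [mem_inf]
  have hinf_compl : univ.inf (fun x => ({h : α → β | IsLonelyPoint h x} : Finset _)ᶜ) =
      ({h | ∀ x, ¬ IsLonelyPoint h x} : Finset _) := by
    ext h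
    simp [mem_inf]
  rw [← hinf_compl, inclusion_exclusion_card_inf_compl]
  simp only [hinf, card_filter_forall_mem_isLonelyPoint]
  rw [sum_powerset_apply_card (fun a => (-1 : ℤ) ^ a * ((Fintype.card β).descFactorial a *
    (Fintype.card β - a) ^ (Fintype.card α - a) : ℕ)), Finset.card_univ]
  refine sum_congr rfl fun a _ => ?_
  rw [nsmul_eq_mul]
  ring

end LonelyPoints

section PairedMaps

variable {α β γ : Type*}

def pairedMap (e : γ ⊕ γ ≃ α) (g : γ ↪ β) (τ : Equiv.Perm γ) : α → β :=
  Sum.elim g (g ∘ τ) ∘ e.symm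

theorem not_isLonelyPoint_pairedMap (e : γ ⊕ γ ≃ α) (g : γ ↪ β) (τ : Equiv.Perm γ) (x : α) :
    ¬ IsLonelyPoint (pairedMap e g τ) x := by
  obtain ⟨s, rfl⟩ := e.surjective x
  have partner : ∃ s', s' ≠ s ∧ Sum.elim g (g ∘ τ) s' = Sum.elim g (g ∘ τ) s := by
    rcases s with j | i
    · exact ⟨Sum.inr (τ.symm j), Sum.inr_ne_inl, by simp⟩
    · exact ⟨Sum.inl (τ i), Sum.inl_ne_inr, rfl⟩
  obtain ⟨s', hne, heq⟩ := partner
  exact fun hl => hne (e.injective (hl (e s') (by simpa [pairedMap] using heq)))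

theorem pairedMap_injective (e : γ ⊕ γ ≃ α) :
    Function.Injective fun p : (γ ↪ β) × Equiv.Perm γ => pairedMap e p.1 p.2 := by
  rintro ⟨g₁, τ₁⟩ ⟨g₂, τ₂⟩ H
  have hs (s : γ ⊕ γ) : Sum.elim g₁ (g₁ ∘ τ₁) s = Sum.elim g₂ (g₂ ∘ τ₂) s := by
    simpa [pairedMap] using congrFun H (e s)
  obtain rfl : g₁ = g₂ := DFunLike.ext _ _ fun j => hs (Sum.inl j)
  exact Prod.ext rfl (Equiv.ext fun i => g₁.injective (hs (Sum.inr i)))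

variable [Fintype α] [DecidableEq α] [Fintype β] [DecidableEq β]

theorem card_embedding_mul_card_perm_le [Fintype γ] [DecidableEq γ]
    (hα : Fintype.card α = Fintype.card γ + Fintype.card γ) :
    Fintype.card (γ ↪ β) * Fintype.card (Equiv.Perm γ) ≤
      #{h : α → β | ∀ x, ¬ IsLonelyPoint h x} := by
  let e : γ ⊕ γ ≃ α := Fintype.equivOfCardEq (by rw [Fintype.card_sum, hα])
  rw [← Fintype.card_prod, ← Fintype.card_subtype]
  exact Fintype.card_le_of_injective
    (fun p => ⟨pairedMap e p.1 p.2, not_isLonelyPoint_pairedMap e p.1 p.2⟩)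
    fun p q hpq => pairedMap_injective e (congrArg Subtype.val hpq)

theorem neg_one_pow_mul_factorial_le_card_filter_forall_not_isLonelyPoint :
    (-1 : ℤ) ^ Fintype.card α * (Fintype.card α)! ≤ #{h : α → α | ∀ x, ¬ IsLonelyPoint h x} := by
  rcases Nat.even_or_odd (Fintype.card α) with ⟨m, hm⟩ | hodd
  · have hfac : (m + m).descFactorial m * m ! = (m + m)! := by
      simpa [mul_comm] using Nat.factorial_mul_descFactorial (n := m + m) (k := m) (by omega)
    have h := card_embedding_mul_card_perm_le (α := α) (β := α) (γ := Fin m) (by simp [hm])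
    rw [Fintype.card_embedding_eq, Fintype.card_perm, Fintype.card_fin, hm, hfac] at h
    rw [hm, Even.neg_one_pow ⟨m, rfl⟩, one_mul]
    exact_mod_cast h
  · rw [hodd.neg_one_pow, neg_one_mul]
    exact (neg_nonpos.2 (Int.natCast_nonneg _)).trans (Int.natCast_nonneg _)

end PairedMaps

theorem descFactorial_sub_mul_pow_self {n k : ℕ} (hk : 1 ≤ k) (hkn : k ≤ n) :
    n.descFactorial (n - k) * k ^ k = n * ((n - 1)! / (k - 1)! * k ^ (k - 1)) := by
  obtain ⟨k, rfl⟩ := Nat.exists_eq_add_of_le' hk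
  obtain ⟨n, rfl⟩ := Nat.exists_eq_add_of_le' (hk.trans hkn)
  have hsucc := Nat.succ_descFactorial n (n - k)
  rw [show n + 1 - (n - k) = k + 1 by omega,
    Nat.descFactorial_eq_div (Nat.sub_le n k), Nat.sub_sub_self (by omega)] at hsucc
  simp only [Nat.add_sub_cancel, show n + 1 - (k + 1) = n - k by omega]
  calc (n + 1).descFactorial (n - k) * (k + 1) ^ (k + 1)
      = (k + 1) * (n + 1).descFactorial (n - k) * (k + 1) ^ k := by ring
    _ = (n + 1) * (n ! / k ! * (k + 1) ^ k) := by rw [hsucc]; ring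

theorem card_filter_forall_not_isLonelyPoint_eq {α : Type*} [Fintype α] [DecidableEq α] {n : ℕ}
    (hα : Fintype.card α = n) :
    (#{h : α → α | ∀ x, ¬ IsLonelyPoint h x} : ℤ) =
      (-1) ^ n * n ! + n * ∑ k ∈ Icc 1 n, (-1 : ℤ) ^ (n - k) * (n.choose k) *
        (((n - 1)! / (k - 1)! : ℕ) : ℤ) * (k : ℤ) ^ (k - 1) := by
  rw [card_filter_forall_not_isLonelyPoint, hα, ← sum_range_reflect, Nat.add_sub_cancel,
    range_succ_eq_Icc_zero, ← insert_Icc_add_one_left_eq_Icc (zero_le n), sum_insert (by simp),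
    mul_sum]
  congr 1
  · simp [Nat.descFactorial_self]
  · refine sum_congr rfl fun k hk => ?_
    obtain ⟨hk, hkn⟩ := mem_Icc.1 hk
    rw [Nat.sub_sub_self hkn, Nat.choose_symm hkn, descFactorial_sub_mul_pow_self hk hkn]
    push_cast
    ring

/-- For all `n ≥ 1`, `∑_{k=1}^n (-1)^{n-k} C(n,k) ((n-1)!/(k-1)!) k^{k-1} ≥ 0`. -/
theorem stmt13 (n : ℕ) (hn : 1 ≤ n) :
    0 ≤ ∑ k ∈ Finset.Icc 1 n, (-1 : ℤ) ^ (n - k) * (n.choose k) *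
      (((n - 1).factorial / (k - 1).factorial : ℕ) : ℤ) * (k : ℤ) ^ (k - 1) := by
  have hcount := card_filter_forall_not_isLonelyPoint_eq (Fintype.card_fin n)
  have hlower := neg_one_pow_mul_factorial_le_card_filter_forall_not_isLonelyPoint (α := Fin n)
  rw [Fintype.card_fin] at hlower
  exact nonneg_of_mul_nonneg_right (a := (n : ℤ)) (by linarith) (by exact_mod_cast hn)
end

section
/- The number of rooted labeled trees on a k-element vertex set is k^{k-1}. -/
/-!
A rooted tree on `S` is the same as a map `f : S → S` that fixes the root `r` and sends every
other vertex to its neighbour towards `r`. Mark a second vertex `a` (Joyal): the path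
`a, f a, …, r` (the spine) is a linear order of its vertex set `P`, and cutting the edges of
this path leaves a forest with root set `P`. An arbitrary map `g : S → S` decomposes in the same way, with `P` its
set of periodic points, except that `g` permutes `P` instead of ordering it. Since a finite set
has as many linear orders as permutations, `k · #(rooted trees) = #(S → S) = k ^ k`.
-/

open Function Finset SimpleGraph Equiv Nat

variable {S : Type*}

lemma Set.EqOn.iterate_eq_of_iterate_mem {f g : S → S} {N : Set S} (hfg : Set.EqOn f g N)
    {x : S} : ∀ {n : ℕ}, (∀ i < n, g^[i] x ∈ N) → f^[n] x = g^[n] x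
  | 0, _ => rfl
  | n + 1, h => by
    rw [iterate_succ_apply', iterate_succ_apply',
      hfg.iterate_eq_of_iterate_mem fun i hi => h i (by omega)]
    exact hfg (h n n.lt_succ_self)

lemma Function.exists_iterate_mem_periodicPts [Finite S] (g : S → S) (x : S) :
    ∃ n, g^[n] x ∈ periodicPts g := by
  obtain ⟨m, n, heq, hne⟩ : ∃ m n, g^[m] x = g^[n] x ∧ m ≠ n := by
    simpa [Injective] using not_injective_infinite_finite (g^[·] x)
  wlog hlt : m < n generalizing m n
  · exact this n m heq.symm hne.symm (by omega)
  refine ⟨m, mk_mem_periodicPts (n := n - m) (by omega) ?_⟩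
  change g^[n - m] (g^[m] x) = g^[m] x
  rw [← iterate_add_apply, Nat.sub_add_cancel hlt.le, heq]

lemma Set.MapsTo.mem_of_mem_periodicPts {g : S → S} {N : Set S} (hN : Set.MapsTo g N N)
    {x : S} (hx : x ∈ periodicPts g) {n : ℕ} (hn : g^[n] x ∈ N) : x ∈ N := by
  obtain ⟨m, hm, hper⟩ := mem_periodicPts.1 hx
  have : g^[m * n - n] (g^[n] x) = x := by
    rw [← iterate_add_apply, Nat.sub_add_cancel (Nat.le_mul_of_pos_left n hm)]
    exact hper.mul_const n
  exact this ▸ hN.iterate _ hn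

lemma Equiv.Perm.mapsTo_of_forall_notMem {σ : Perm S} {N : Set S} (hσ : ∀ x ∉ N, σ x = x) :
    Set.MapsTo σ N N :=
  fun x hx => by_contra fun h => h <| by rwa [σ.injective (hσ _ h)]

/-- Encodes a forest with root set `M`: `f x` is the parent of a vertex `x ∉ M`, and the roots
are fixed. -/
def IsRootedForest (M : Set S) (f : S → S) : Prop :=
  (∀ x ∈ M, f x = x) ∧ ∀ x, ∃ n, f^[n] x ∈ M

namespace IsRootedForest

variable {M : Set S} {f : S → S} {x : S} {n : ℕ}

noncomputable def depth (hf : IsRootedForest M f) (x : S) : ℕ := by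
  classical exact Nat.find (hf.2 x)

variable (hf : IsRootedForest M f)
include hf

lemma iterate_depth_mem (x : S) : f^[hf.depth x] x ∈ M := by
  classical rw [depth]; exact Nat.find_spec (hf.2 x)

lemma iterate_notMem_of_lt_depth (h : n < hf.depth x) : f^[n] x ∉ M := by
  classical rw [depth] at h; exact Nat.find_min (hf.2 x) h

lemma depth_eq_iff : hf.depth x = n ↔ f^[n] x ∈ M ∧ ∀ i < n, f^[i] x ∉ M := by
  classical rw [depth]; exact Nat.find_eq_iff (hf.2 x)

lemma depth_apply (hx : x ∉ M) : hf.depth (f x) + 1 = hf.depth x := by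
  classical
  simp only [depth]
  exact (Nat.find_comp_succ (hf.2 x) (hf.2 (f x)) hx).symm

lemma apply_ne (hx : x ∉ M) : f x ≠ x := by
  intro h
  have := hf.depth_apply hx
  rw [h] at this
  omega

lemma apply_apply_ne (hx : x ∉ M) : f (f x) ≠ x := by
  by_cases hfx : f x ∈ M
  · rw [hf.1 _ hfx]; exact hf.apply_ne hx
  · intro h
    have h1 := hf.depth_apply hx
    have h2 := hf.depth_apply hfx
    rw [h] at h2
    omega

lemma nonempty [Nonempty S] : M.Nonempty :=
  ⟨_, hf.iterate_depth_mem (Classical.arbitrary S)⟩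

end IsRootedForest

section RootedTrees

def functionalGraph (f : S → S) : SimpleGraph S := fromRel fun x y => f x = y

lemma functionalGraph_adj {f : S → S} {x y : S} :
    (functionalGraph f).Adj x y ↔ x ≠ y ∧ (f x = y ∨ f y = x) :=
  fromRel_adj _ _ _

lemma functionalGraph_reachable_iterate (f : S → S) (x : S) :
    ∀ n, (functionalGraph f).Reachable x (f^[n] x)
  | 0 => .rfl
  | n + 1 => by
    rw [iterate_succ_apply']
    refine (functionalGraph_reachable_iterate f x n).trans ?_
    by_cases h : f^[n] x = f (f^[n] x)
    · rw [← h]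
    · exact (functionalGraph_adj.2 ⟨h, .inl rfl⟩).reachable

namespace IsRootedForest

variable {M : Set S} {f g : S → S} {r : S}

lemma connected_functionalGraph (hf : IsRootedForest {r} f) : (functionalGraph f).Connected := by
  have : Nonempty S := ⟨r⟩
  have hr (x : S) : (functionalGraph f).Reachable x r := by
    have := functionalGraph_reachable_iterate f x (hf.depth x)
    rwa [Set.mem_singleton_iff.1 (hf.iterate_depth_mem x)] at this
  exact ⟨fun x y => (hr x).trans (hr y).symm⟩

noncomputable def edgeEquiv (hf : IsRootedForest M f) : (Mᶜ : Set S) ≃ (functionalGraph f).edgeSet :=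
  Equiv.ofBijective
    (fun x => ⟨s(x.1, f x.1), functionalGraph_adj.2 ⟨(hf.apply_ne x.2).symm, .inl rfl⟩⟩) <| by
    constructor
    · rintro ⟨x, hx⟩ ⟨y, hy⟩ h
      replace h := congrArg Subtype.val h
      simp only [Sym2.eq_iff] at h
      rcases h with ⟨h, -⟩ | ⟨h1, h2⟩
      · exact Subtype.ext h
      · exact absurd (by rw [h2, h1]) (hf.apply_apply_ne hx)
    · rintro ⟨e, he⟩
      induction e using Sym2.ind with
      | _ u v =>
      obtain ⟨huv, h | h⟩ := functionalGraph_adj.1 he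
      · exact ⟨⟨u, fun hu => huv (h ▸ (hf.1 u hu).symm)⟩, by simp [h]⟩
      · exact ⟨⟨v, fun hv => huv (h ▸ hf.1 v hv)⟩, by simp [h, Sym2.eq_swap]⟩

lemma isTree_functionalGraph [Finite S] (hf : IsRootedForest {r} f) :
    (functionalGraph f).IsTree := by
  rw [isTree_iff_connected_and_card]
  refine ⟨hf.connected_functionalGraph, ?_⟩
  rw [← Nat.card_congr hf.edgeEquiv, Nat.card_coe_set_eq, add_comm, ← Set.ncard_singleton r]
  exact Set.ncard_add_ncard_compl _

lemma eq_of_functionalGraph_eq (hf : IsRootedForest M f) (hg : IsRootedForest M g)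
    (h : functionalGraph f = functionalGraph g) : f = g := by
  funext x
  induction hn : hf.depth x using Nat.strong_induction_on generalizing x with
  | _ n ih =>
  by_cases hx : x ∈ M
  · rw [hf.1 x hx, hg.1 x hx]
  have hadj : (functionalGraph g).Adj x (f x) :=
    h ▸ functionalGraph_adj.2 ⟨(hf.apply_ne hx).symm, .inl rfl⟩
  rcases (functionalGraph_adj.1 hadj).2 with h' | h'
  · exact h'.symm
  · have := ih _ (by have := hf.depth_apply hx; omega) (f x) rfl
    exact absurd (this.trans h') (hf.apply_apply_ne hx)

end IsRootedForest

namespace SimpleGraph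

variable {G : SimpleGraph S}

lemma Connected.exists_adj_dist_lt (hG : G.Connected) {x r : S} (hx : x ≠ r) :
    ∃ y, G.Adj x y ∧ G.dist y r < G.dist x r := by
  obtain ⟨p, hp⟩ := hG.exists_walk_length_eq_dist x r
  have hnil : ¬p.Nil := Walk.not_nil_of_ne hx
  refine ⟨p.snd, p.adj_snd hnil, ?_⟩
  have := (dist_le p.tail).trans_eq p.length_tail
  have := hG.pos_dist_of_ne hx
  omega

lemma Connected.exists_isRootedForest_functionalGraph_le (hG : G.Connected) (r : S) :
    ∃ f, IsRootedForest {r} f ∧ functionalGraph f ≤ G := by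
  have (x : S) : ∃ y, (x = r → y = r) ∧ (x ≠ r → G.Adj x y ∧ G.dist y r < G.dist x r) := by
    by_cases hx : x = r
    · exact ⟨r, fun _ => rfl, fun h => absurd hx h⟩
    · obtain ⟨y, hy⟩ := hG.exists_adj_dist_lt hx
      exact ⟨y, fun h => absurd h hx, fun _ => hy⟩
  choose f hroot hstep using this
  have hreach (x : S) : ∃ n, f^[n] x ∈ ({r} : Set S) := by
    induction hn : G.dist x r using Nat.strong_induction_on generalizing x with
    | _ n ih =>
    by_cases hx : x = r
    · exact ⟨0, hx⟩
    · obtain ⟨m, hm⟩ := ih _ (hn ▸ (hstep x hx).2) (f x) rfl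
      exact ⟨m + 1, hm⟩
  refine ⟨f, ⟨by simpa using hroot r rfl, hreach⟩, fun x y hxy => ?_⟩
  obtain ⟨hne, h | h⟩ := functionalGraph_adj.1 hxy
  · have hx : x ≠ r := fun hx => hne (hx.trans ((hroot x hx).symm.trans h))
    exact h ▸ (hstep x hx).1
  · have hy : y ≠ r := fun hy => hne ((h.symm.trans (hroot y hy)).trans hy.symm)
    exact h ▸ (hstep y hy).1.symm

lemma IsTree.exists_isRootedForest_functionalGraph_eq (hG : G.IsTree) (r : S) :
    ∃ f, IsRootedForest {r} f ∧ functionalGraph f = G := by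
  obtain ⟨f, hf, hle⟩ := hG.connected.exists_isRootedForest_functionalGraph_le r
  exact ⟨f, hf, (isTree_iff_minimal_connected.1 hG).eq_of_le hf.connected_functionalGraph hle⟩

end SimpleGraph

lemma card_rootedTrees_eq_card_rootedForests [Finite S] :
    Nat.card {p : S × SimpleGraph S // p.2.IsTree} =
      Nat.card {q : S × (S → S) // IsRootedForest {q.1} q.2} := by
  refine (Nat.card_eq_of_bijective
    (fun q => ⟨(q.1.1, functionalGraph q.1.2), q.2.isTree_functionalGraph⟩) ⟨?_, ?_⟩).symm
  · rintro ⟨⟨r, f⟩, hf⟩ ⟨⟨r', g⟩, hg⟩ h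
    simp only [Subtype.mk.injEq, Prod.mk.injEq] at h
    obtain ⟨rfl, h⟩ := h
    exact Subtype.ext (Prod.ext rfl (hf.eq_of_functionalGraph_eq hg h))
  · rintro ⟨⟨r, G⟩, hG⟩
    obtain ⟨f, hf, rfl⟩ := hG.exists_isRootedForest_functionalGraph_eq r
    exact ⟨⟨(r, f), hf⟩, rfl⟩

end RootedTrees

section PeriodicPoints

variable [DecidableEq S] {M : Finset S}

lemma isRootedForest_piecewise_id {g : S → S} (hg : ∀ x, ∃ n, g^[n] x ∈ M) :
    IsRootedForest ↑M (M.piecewise id g) := by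
  refine ⟨fun x hx => M.piecewise_eq_of_mem _ _ hx, fun x => ⟨Nat.find (hg x), ?_⟩⟩
  rw [Set.EqOn.iterate_eq_of_iterate_mem (N := (↑M)ᶜ) (g := g)
    (fun y hy => M.piecewise_eq_of_notMem _ _ hy) (fun i hi => Nat.find_min (hg x) hi)]
  exact Nat.find_spec (hg x)

lemma injective_piecewise_of_periodicPts_eq {g : S → S} (hM : periodicPts g = ↑M) :
    Injective (M.piecewise g id) := by
  have hbij := hM ▸ bijOn_periodicPts g
  intro x y hxy
  by_cases hx : x ∈ M <;> by_cases hy : y ∈ M <;>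
    simp only [Finset.piecewise_eq_of_mem, Finset.piecewise_eq_of_notMem, hx, hy,
      not_false_eq_true, id] at hxy
  · exact hbij.injOn hx hy hxy
  · exact absurd (hxy ▸ hbij.mapsTo hx) hy
  · exact absurd (hxy ▸ hbij.mapsTo hy) hx
  · exact hxy

variable [Finite S]

lemma periodicPts_piecewise_perm {σ : Perm S} (hσ : ∀ x ∉ M, σ x = x) {h : S → S}
    (hh : IsRootedForest ↑M h) : periodicPts (M.piecewise σ h) = ↑M := by
  have hσM := Perm.mapsTo_of_forall_notMem (N := ↑M) fun x hx => hσ x hx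
  have hM : Set.MapsTo (M.piecewise σ h) ↑M ↑M := fun x hx => by
    rw [M.piecewise_eq_of_mem _ _ hx]; exact hσM hx
  ext x
  constructor
  · intro hx
    refine hM.mem_of_mem_periodicPts hx (n := hh.depth x) ?_
    rw [Set.EqOn.iterate_eq_of_iterate_mem (N := (↑M)ᶜ) (g := h)
      (fun y hy => M.piecewise_eq_of_notMem _ _ hy)
      (fun i hi => hh.iterate_notMem_of_lt_depth hi)]
    exact hh.iterate_depth_mem x
  · intro hx
    obtain ⟨n, hn, hper⟩ := mem_periodicPts.1 (σ.injective.mem_periodicPts x)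
    refine mk_mem_periodicPts hn ?_
    rw [IsPeriodicPt, IsFixedPt, Set.EqOn.iterate_eq_of_iterate_mem (N := ↑M) (g := σ)
      (fun y hy => M.piecewise_eq_of_mem _ _ hy) (fun i _ => hσM.iterate i hx)]
    exact hper

noncomputable def periodicPtsFiberEquiv (M : Finset S) :
    {g : S → S // periodicPts g = ↑M} ≃
      {σ : Perm S // ∀ x ∉ M, σ x = x} × {h : S → S // IsRootedForest ↑M h} where
  toFun g :=
    (⟨Equiv.ofBijective _ (Finite.injective_iff_bijective.1
        (injective_piecewise_of_periodicPts_eq g.2)),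
      fun x hx => M.piecewise_eq_of_notMem _ _ hx⟩,
     ⟨M.piecewise id g, isRootedForest_piecewise_id fun x => by
        simpa [g.2] using exists_iterate_mem_periodicPts g.1 x⟩)
  invFun p := ⟨M.piecewise p.1.1 p.2.1, periodicPts_piecewise_perm p.1.2 p.2.2⟩
  left_inv g := Subtype.ext <| funext fun x => by by_cases hx : x ∈ M <;> simp [hx]
  right_inv := by
    rintro ⟨⟨σ, hσ⟩, ⟨h, hh⟩⟩
    refine Prod.ext (Subtype.ext <| Equiv.ext fun x => ?_) (Subtype.ext <| funext fun x => ?_)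
    · by_cases hx : x ∈ M <;> simp [hx, hσ]
    · by_cases hx : x ∈ M
      · simp [hx, hh.1 x hx]
      · simp [hx]

lemma card_periodicPts_fiber (M : Finset S) :
    Nat.card {g : S → S // periodicPts g = ↑M} =
      (#M)! * Nat.card {h : S → S // IsRootedForest ↑M h} := by
  rw [Nat.card_congr (periodicPtsFiberEquiv M), Nat.card_prod,
    ← Nat.card_congr (Perm.subtypeEquivSubtypePerm (· ∈ M)), Nat.card_perm,
    Nat.card_eq_fintype_card, Fintype.card_coe]

end PeriodicPoints

section Spine

namespace IsRootedForest

variable {M : Set S} {f : S → S} (hf : IsRootedForest M f) (a : S)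
include hf

lemma injOn_iterate : Set.InjOn (f^[·] a) (Set.Iic (hf.depth a)) := by
  have key {i j : ℕ} (hij : i < j) (hj : j ≤ hf.depth a) : f^[i] a ≠ f^[j] a := fun he => by
    have hmem : f^[hf.depth a - j + i] a ∈ M := by
      rw [iterate_add_apply, he, ← iterate_add_apply, Nat.sub_add_cancel hj]
      exact hf.iterate_depth_mem a
    exact hf.iterate_notMem_of_lt_depth (by omega) hmem
  intro i hi j hj hij
  rcases lt_trichotomy i j with h | h | h
  exacts [absurd hij (key h hj), h, absurd hij.symm (key h hi)]

variable [DecidableEq S]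

noncomputable def spine : Finset S := (range (hf.depth a + 1)).image (f^[·] a)

lemma mem_spine {y : S} : y ∈ hf.spine a ↔ ∃ i ≤ hf.depth a, f^[i] a = y := by
  simp [spine]

lemma card_spine : #(hf.spine a) = hf.depth a + 1 := by
  rw [spine, Finset.card_image_of_injOn, card_range]
  exact (hf.injOn_iterate a).mono fun i hi => Nat.lt_succ_iff.1 (mem_range.1 hi)

variable {a} {P : Finset S} (hP : hf.spine a = P)
include hP

lemma iterate_mem_of_spine_eq {i : ℕ} (hi : i < #P) : f^[i] a ∈ P :=
  hP ▸ (hf.mem_spine a).2 ⟨i, by rw [← hP, card_spine] at hi; omega, rfl⟩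

noncomputable def spineEquiv : Fin #P ≃ P :=
  Equiv.ofBijective (fun i => ⟨f^[i] a, hf.iterate_mem_of_spine_eq hP i.2⟩) <| by
    refine (Fintype.bijective_iff_injective_and_card _).2 ⟨fun i j hij => ?_, by simp⟩
    have hle (k : Fin #P) : (k : ℕ) ∈ Set.Iic (hf.depth a) := by
      have := hP ▸ hf.card_spine a; have := k.2; simp only [Set.mem_Iic]; omega
    exact Fin.ext (hf.injOn_iterate a (hle i) (hle j) (congrArg Subtype.val hij))

@[simp] lemma spineEquiv_apply (i : Fin #P) : (hf.spineEquiv hP i : S) = f^[i] a := rfl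

end IsRootedForest

variable [DecidableEq S]

section PathJoin

variable {P : Finset S} {m : ℕ} (e : Fin m ≃ P) (h : S → S)

/-- Glues the path `e 0 → e 1 → ⋯ → e (m - 1)` onto the forest `h` rooted at `P`. -/
noncomputable def pathJoin (x : S) : S :=
  if hx : x ∈ P then
    if hi : (e.symm ⟨x, hx⟩ : ℕ) + 1 < m then e ⟨e.symm ⟨x, hx⟩ + 1, hi⟩ else x
  else h x

lemma pathJoin_apply_of_lt {i : ℕ} (hi : i + 1 < m) :
    pathJoin e h (e ⟨i, by omega⟩) = e ⟨i + 1, hi⟩ := by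
  simp [pathJoin, hi]

lemma pathJoin_apply_last (hm : 0 < m) :
    pathJoin e h (e ⟨m - 1, by omega⟩) = e ⟨m - 1, by omega⟩ := by
  simp [pathJoin, Nat.sub_add_cancel hm]

lemma pathJoin_of_notMem {x : S} (hx : x ∉ P) : pathJoin e h x = h x := by
  simp [pathJoin, hx]

lemma iterate_pathJoin {i : ℕ} (hi : i < m) :
    (pathJoin e h)^[i] (e ⟨0, by omega⟩) = e ⟨i, hi⟩ := by
  induction i with
  | zero => rfl
  | succ i ih => rw [iterate_succ_apply', ih (by omega), pathJoin_apply_of_lt e h hi]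

variable {h} (hh : IsRootedForest ↑P h) (hm : 0 < m)
include hh hm

lemma isRootedForest_pathJoin : IsRootedForest {(e ⟨m - 1, by omega⟩ : S)} (pathJoin e h) := by
  refine ⟨fun x hx => hx ▸ pathJoin_apply_last e h hm, fun x => ?_⟩
  have hroot : ∀ i : Fin m, (pathJoin e h)^[m - 1 - i] (e i) = e ⟨m - 1, by omega⟩ := by
    rintro ⟨i, hi⟩
    rw [← iterate_pathJoin e h hi, ← iterate_add_apply, Nat.sub_add_cancel (by omega),
      iterate_pathJoin]
  have hd : (pathJoin e h)^[hh.depth x] x = h^[hh.depth x] x :=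
    Set.EqOn.iterate_eq_of_iterate_mem (N := (↑P)ᶜ) (fun y hy => pathJoin_of_notMem e h hy)
      fun i hi => hh.iterate_notMem_of_lt_depth hi
  set y : P := ⟨_, hh.iterate_depth_mem x⟩
  refine ⟨m - 1 - e.symm y + hh.depth x, ?_⟩
  rw [iterate_add_apply, hd, show h^[hh.depth x] x = e (e.symm y) by simp [y], hroot]
  rfl

lemma depth_pathJoin : (isRootedForest_pathJoin e hh hm).depth (e ⟨0, hm⟩) = m - 1 := by
  rw [IsRootedForest.depth_eq_iff, iterate_pathJoin e h (by omega)]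
  refine ⟨rfl, fun i hi he => ?_⟩
  rw [iterate_pathJoin e h (by omega), Set.mem_singleton_iff, SetLike.coe_eq_coe,
    e.apply_eq_iff_eq, Fin.mk.injEq] at he
  omega

lemma spine_pathJoin (hmP : m = #P) :
    (isRootedForest_pathJoin e hh hm).spine (e ⟨0, hm⟩) = P := by
  ext y
  rw [IsRootedForest.mem_spine, depth_pathJoin e hh hm]
  constructor
  · rintro ⟨i, hi, rfl⟩
    rw [iterate_pathJoin e h (by omega)]
    exact Subtype.prop _
  · intro hy
    refine ⟨e.symm ⟨y, hy⟩, by omega, ?_⟩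
    rw [iterate_pathJoin e h (e.symm _).2]
    simp

end PathJoin

namespace IsRootedForest

variable {f : S → S} {r a : S} (hf : IsRootedForest {r} f) {P : Finset S} (hP : hf.spine a = P)
include hf hP

lemma exists_iterate_mem_of_spine_eq (x : S) : ∃ n, f^[n] x ∈ P := by
  refine ⟨hf.depth x, ?_⟩
  rw [Set.mem_singleton_iff.1 (hf.iterate_depth_mem x), ← hP, mem_spine]
  exact ⟨hf.depth a, le_rfl, hf.iterate_depth_mem a⟩

lemma spineEquiv_last (h : #P - 1 < #P) : (hf.spineEquiv hP ⟨#P - 1, h⟩ : S) = r := by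
  rw [spineEquiv_apply, Fin.val_mk,
    show #P - 1 = hf.depth a by have := hP ▸ hf.card_spine a; omega]
  exact hf.iterate_depth_mem a

lemma pathJoin_spineEquiv : pathJoin (hf.spineEquiv hP) (P.piecewise id f) = f := by
  funext x
  by_cases hx : x ∈ P
  · obtain ⟨⟨i, hi⟩, hei⟩ := (hf.spineEquiv hP).surjective ⟨x, hx⟩
    rw [show x = hf.spineEquiv hP ⟨i, hi⟩ by rw [hei]]
    rcases Nat.lt_or_ge (i + 1) #P with hlt | hge
    · rw [pathJoin_apply_of_lt _ _ hlt, spineEquiv_apply, spineEquiv_apply, iterate_succ_apply']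
    · obtain rfl : i = #P - 1 := by omega
      rw [pathJoin_apply_last _ _ (by omega), hf.spineEquiv_last hP, hf.1 r rfl]
  · rw [pathJoin_of_notMem _ _ hx, P.piecewise_eq_of_notMem _ _ hx]

end IsRootedForest

noncomputable def spineFiberEquiv [Nonempty S] (P : Finset S) :
    {d : {q : S × (S → S) // IsRootedForest {q.1} q.2} × S // d.1.2.spine d.2 = P} ≃
      (Fin #P ≃ P) × {h : S → S // IsRootedForest ↑P h} where
  toFun d := (d.1.1.2.spineEquiv d.2,
    ⟨P.piecewise id d.1.1.1.2,
      isRootedForest_piecewise_id (d.1.1.2.exists_iterate_mem_of_spine_eq d.2)⟩)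
  invFun p :=
    have hm : 0 < #P := card_pos.2 (coe_nonempty.1 p.2.2.nonempty)
    ⟨(⟨(p.1 ⟨#P - 1, by omega⟩, pathJoin p.1 p.2.1), isRootedForest_pathJoin p.1 p.2.2 hm⟩,
      p.1 ⟨0, hm⟩), spine_pathJoin p.1 p.2.2 hm rfl⟩
  left_inv := by
    rintro ⟨⟨⟨⟨r, f⟩, hf⟩, a⟩, hP⟩
    exact Subtype.ext <| Prod.ext (Subtype.ext <| Prod.ext (hf.spineEquiv_last hP _)
      (hf.pathJoin_spineEquiv hP)) rfl
  right_inv := by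
    rintro ⟨e, h, hh⟩
    refine Prod.ext (Equiv.ext fun i => Subtype.ext ?_) (Subtype.ext <| funext fun x => ?_)
    · exact iterate_pathJoin e h i.2
    · by_cases hx : x ∈ P
      · exact (P.piecewise_eq_of_mem _ _ hx).trans (hh.1 x hx).symm
      · exact (P.piecewise_eq_of_notMem _ _ hx).trans (pathJoin_of_notMem e h hx)

lemma card_spine_fiber [Nonempty S] (P : Finset S) :
    Nat.card {d : {q : S × (S → S) // IsRootedForest {q.1} q.2} × S // d.1.2.spine d.2 = P} =
      (#P)! * Nat.card {h : S → S // IsRootedForest ↑P h} := by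
  rw [Nat.card_congr (spineFiberEquiv P), Nat.card_prod,
    Nat.card_eq_fintype_card (α := Fin #P ≃ P), Fintype.card_equiv P.equivFin.symm,
    Fintype.card_fin]

end Spine

lemma Nat.card_eq_sum_card_fiber {α β : Type*} [Finite α] [Fintype β] (p : α → β) :
    Nat.card α = ∑ b, Nat.card {a // p a = b} := by
  rw [← Nat.card_sigma, Nat.card_congr (Equiv.sigmaFiberEquiv p)]

lemma card_rootedForests_prod_eq_card_fun [Fintype S] [DecidableEq S] [Nonempty S] :
    Nat.card ({q : S × (S → S) // IsRootedForest {q.1} q.2} × S) = Nat.card (S → S) := by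
  rw [Nat.card_eq_sum_card_fiber fun d : {q : S × (S → S) // IsRootedForest {q.1} q.2} × S =>
      d.1.2.spine d.2,
    Nat.card_eq_sum_card_fiber fun g : S → S => (Set.toFinite (periodicPts g)).toFinset]
  refine Finset.sum_congr rfl fun P _ => ?_
  rw [card_spine_fiber, ← card_periodicPts_fiber]
  exact Nat.card_congr <| Equiv.subtypeEquivRight fun g => by
    rw [← coe_inj, Set.Finite.coe_toFinset]

/-- The number of rooted labeled trees on a `k`-element vertex set is `k^{k-1}`. -/
theorem stmt14 (k : ℕ) (hk : 0 < k) (S : Type) [Fintype S] (hS : Fintype.card S = k) :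
    Nat.card {p : S × SimpleGraph S // p.2.IsTree} = k ^ (k - 1) := by
  classical
  have : Nonempty S := Fintype.card_pos_iff.1 (hS ▸ hk)
  have h := card_rootedForests_prod_eq_card_fun (S := S)
  rw [Nat.card_prod, Nat.card_fun, ← card_rootedTrees_eq_card_rootedForests,
    Nat.card_eq_fintype_card (α := S), hS] at h
  apply Nat.eq_of_mul_eq_mul_right hk
  rw [h, ← pow_succ, Nat.sub_add_cancel hk]
end
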